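/- For every n ≥ 2, the set V(S_n) := ⋃_{x̄ ∈ S_n↑} V(x̄), where for x̄ ∈ ℤⁿ the set V(x̄) consists of x̄ itself together with, for each k ∈ {1,…,n−1}, the point (x̄₁, …, x̄_{k−1}, x̄_k + 1, 0, …, 0), has cardinality |V(S_n)| = 2ⁿ + 2^{n−1} − 2. -/

import Mathlib

/-!
A point of `S_n` is never integral (integral points of `[0,1]ⁿ` are at squared distance `n/4`
from `𝟙/2`), and rounding up its first fractional coordinate (which lies in `(0,1)`) gives a
nonzero 0/1 vector; conversely, halving the last `1` of a nonzero 0/1 vector gives a point of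
`S_n` at squared distance `(n-1)/4`. So `S_n↑ = {0,1}ⁿ \ {0}`, and `V(S_n)` consists of these
`2ⁿ - 1` vectors together with the vectors `(b₀, …, b_{k-1}, 2, 0, …, 0)`, `b ∈ {0,1}ᵏ`,
`k ≤ n - 2`, of which there are `∑_{k < n-1} 2ᵏ = 2^{n-1} - 1`.
-/

/-- `x` is an integer point. -/
def isInt {n : ℕ} (x : Fin n → ℝ) : Prop := ∀ i, ∃ z : ℤ, x i = (z : ℝ)

/-- `w = x↑` for `x ∈ K = ℝⁿ₊`: if `x ∈ ℤⁿ` then `w = x`; otherwise, with `k` the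
smallest index such that `x_k ∉ ℤ`, `wᵢ = xᵢ` for `i < k`, `w_k = ⌈x_k⌉`, and `wᵢ = 0`
for `i > k`. -/
def stdUp {n : ℕ} (x w : Fin n → ℝ) : Prop :=
  (isInt x ∧ w = x) ∨
  ∃ k : Fin n, (¬ ∃ z : ℤ, x k = (z : ℝ)) ∧
    (∀ j : Fin n, j < k → ∃ z : ℤ, x j = (z : ℝ)) ∧
    (∀ i : Fin n, i < k → w i = x i) ∧ w k = (⌈x k⌉ : ℝ) ∧
    (∀ i : Fin n, k < i → w i = 0)

/-- `S_n = {x ∈ [0,1]ⁿ : ‖x - 𝟙/2‖² ≤ n/4 - 3/16}`. -/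
def Sn (n : ℕ) : Set (Fin n → ℝ) :=
  {x | (∀ i, x i ∈ Set.Icc (0 : ℝ) 1) ∧
    ∑ i, (x i - 1/2) ^ 2 ≤ (n : ℝ)/4 - 3/16}

/-- `S_n↑ = {x↑ : x ∈ S_n}`. -/
def SnUp (n : ℕ) : Set (Fin n → ℝ) := {w | ∃ x ∈ Sn n, stdUp x w}

/-- `V(x̄)` consists of `x̄` together with, for each `k ∈ {1,…,n-1}`, the point
`(x̄₁, …, x̄_{k-1}, x̄_k + 1, 0, …, 0)`. -/
def Vpt {n : ℕ} (xb : Fin n → ℝ) : Set (Fin n → ℝ) :=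
  insert xb {w | ∃ k : Fin n, (k : ℕ) + 1 < n ∧
    w = fun i => if i < k then xb i else if i = k then xb k + 1 else 0}

/-- `V(S_n) = ⋃_{x̄ ∈ S_n↑} V(x̄)`. -/
def VS (n : ℕ) : Set (Fin n → ℝ) := ⋃ xb ∈ SnUp n, Vpt xb

open Finset Function

lemma intCast_eq_zero_or_eq_one_of_mem_Icc {R : Type*} [Ring R] [LinearOrder R]
    [IsStrictOrderedRing R] {z : ℤ} (h : (z : R) ∈ Set.Icc 0 1) : (z : R) = 0 ∨ (z : R) = 1 := by
  obtain ⟨h0, h1⟩ := h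
  have : 0 ≤ z := by exact_mod_cast h0
  have : z ≤ 1 := by exact_mod_cast h1
  interval_cases z <;> simp

lemma ceil_eq_one_of_mem_Icc_of_not_intCast {R : Type*} [Ring R] [LinearOrder R]
    [IsStrictOrderedRing R] [FloorRing R] {t : R} (ht : t ∈ Set.Icc 0 1)
    (hnt : ¬ ∃ z : ℤ, t = z) : ⌈t⌉ = 1 := by
  have h0 : t ≠ 0 := fun h => hnt ⟨0, by simp [h]⟩
  rw [Int.ceil_eq_iff]
  exact ⟨by simpa using lt_of_le_of_ne ht.1 h0.symm, by exact_mod_cast ht.2⟩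

lemma sq_sub_half_of_eq_zero_or_eq_one {t : ℝ} (h : t = 0 ∨ t = 1) : (t - 1 / 2) ^ 2 = 1 / 4 := by
  rcases h with rfl | rfl <;> norm_num

lemma half_ne_intCast (z : ℤ) : (1 / 2 : ℝ) ≠ z := by
  intro h
  have : (2 * z : ℤ) = 1 := by exact_mod_cast (by linarith : (2 * z : ℝ) = 1)
  omega

lemma exists_ne_zero_forall_gt_eq_zero {ι M : Type*} [Fintype ι] [LinearOrder ι] [Zero M]
    {w : ι → M} (hw : w ≠ 0) : ∃ k, w k ≠ 0 ∧ ∀ i, k < i → w i = 0 := by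
  classical
  obtain ⟨j, hj⟩ := Function.ne_iff.mp hw
  obtain ⟨k, hk, hmax⟩ := (univ.filter (w · ≠ 0)).exists_max_image id ⟨j, by simpa using hj⟩
  refine ⟨k, (mem_filter.mp hk).2, fun i hi => ?_⟩
  by_contra h
  exact hi.not_ge (hmax i (by simpa using h))

variable {n : ℕ}

noncomputable def zeroOneBox (n : ℕ) : Finset (Fin n → ℝ) := Fintype.piFinset fun _ => {0, 1}

/-- The vectors `(b₀, …, b_{k-1}, c, 0, …, 0)` with `b ∈ {0,1}ᵏ`. -/
noncomputable def stepBox (k : Fin n) (c : ℝ) : Finset (Fin n → ℝ) :=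
  Fintype.piFinset fun i => if i < k then {0, 1} else if i = k then {c} else {0}

noncomputable def twoStepBoxes (n : ℕ) : Finset (Fin n → ℝ) :=
  (univ.filter fun k : Fin n => (k : ℕ) + 1 < n).biUnion fun k => stepBox k 2

lemma mem_zeroOneBox {w : Fin n → ℝ} : w ∈ zeroOneBox n ↔ ∀ i, w i = 0 ∨ w i = 1 := by
  simp [zeroOneBox]

lemma mem_stepBox {k : Fin n} {c : ℝ} {w : Fin n → ℝ} :
    w ∈ stepBox k c ↔
      (∀ i < k, w i = 0 ∨ w i = 1) ∧ w k = c ∧ ∀ i, k < i → w i = 0 := by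
  simp only [stepBox, Fintype.mem_piFinset]
  refine ⟨fun h => ⟨fun i hi => ?_, ?_, fun i hi => ?_⟩, fun ⟨hlt, hk, hgt⟩ i => ?_⟩
  · simpa [hi] using h i
  · simpa using h k
  · simpa [hi.not_gt, hi.ne'] using h i
  · rcases lt_trichotomy i k with hi | rfl | hi
    · simpa [hi] using hlt i hi
    · simpa using hk
    · simpa [hi.not_gt, hi.ne'] using hgt i hi

lemma card_zeroOneBox : #(zeroOneBox n) = 2 ^ n := by
  simp [zeroOneBox]

lemma card_stepBox (k : Fin n) (c : ℝ) : #(stepBox k c) = 2 ^ (k : ℕ) := by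
  have hcard (i : Fin n) : #(if i < k then ({0, 1} : Finset ℝ) else if i = k then {c} else {0}) =
      if i < k then 2 else 1 := by
    split_ifs <;> simp
  simp only [stepBox, Fintype.card_piFinset, hcard, prod_ite, prod_const_one, mul_one,
    prod_const, filter_gt_eq_Iio, Fin.card_Iio]

lemma stepBox_disjoint {k l : Fin n} (hkl : k ≠ l) : Disjoint (stepBox k 2) (stepBox l 2) := by
  rw [disjoint_left]
  intro w hk hl
  rw [mem_stepBox] at hk hl
  rcases hkl.lt_or_gt with h | h
  · rcases hl.1 k h with h' | h' <;> norm_num [hk.2.1] at h'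
  · rcases hk.1 l h with h' | h' <;> norm_num [hl.2.1] at h'

lemma card_twoStepBoxes : #(twoStepBoxes n) = 2 ^ (n - 1) - 1 := by
  rw [twoStepBoxes, card_biUnion fun k _ l _ hkl => stepBox_disjoint hkl]
  simp only [card_stepBox]
  rw [sum_filter, Fin.sum_univ_eq_sum_range (fun k => if k + 1 < n then 2 ^ k else 0),
    ← sum_filter]
  have : (range n).filter (· + 1 < n) = range (n - 1) := by ext; simp; omega
  rw [this, Nat.geomSum_eq le_rfl, Nat.div_one]

lemma update_mem_stepBox {k : Fin n} {c : ℝ} {w : Fin n → ℝ} (hw : w ∈ stepBox k c) (d : ℝ) :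
    update w k d ∈ stepBox k d := by
  rw [mem_stepBox] at hw ⊢
  exact ⟨fun i hi => by simpa [hi.ne] using hw.1 i hi, by simp,
    fun i hi => by simpa [hi.ne'] using hw.2.2 i hi⟩

lemma stepBox_one_subset (k : Fin n) : stepBox k 1 ⊆ zeroOneBox n \ {0} := by
  intro w hw
  rw [mem_stepBox] at hw
  simp only [mem_sdiff, mem_zeroOneBox, mem_singleton]
  refine ⟨fun i => ?_, fun h => by simpa [h] using hw.2.1⟩
  rcases lt_trichotomy i k with hi | rfl | hi
  · exact hw.1 i hi
  · exact Or.inr hw.2.1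
  · exact Or.inl (hw.2.2 i hi)

lemma stepBox_two_subset {k : Fin n} (hk : (k : ℕ) + 1 < n) : stepBox k 2 ⊆ twoStepBoxes n :=
  subset_biUnion_of_mem (fun k => stepBox k 2) (by simpa using hk)

lemma not_isInt_of_mem_Sn {x : Fin n → ℝ} (hx : x ∈ Sn n) : ¬ isInt x := by
  intro hint
  have hsq (i : Fin n) : (x i - 1 / 2) ^ 2 = 1 / 4 := by
    obtain ⟨z, hz⟩ := hint i
    have hz01 := hx.1 i
    rw [hz] at hz01 ⊢
    exact sq_sub_half_of_eq_zero_or_eq_one (intCast_eq_zero_or_eq_one_of_mem_Icc hz01)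
  have := hx.2
  simp only [hsq, sum_const, card_univ, Fintype.card_fin, nsmul_eq_mul] at this
  linarith

lemma mem_zeroOneBox_sdiff_of_stdUp {x w : Fin n → ℝ} (hx : x ∈ Sn n) (hxw : stdUp x w) :
    w ∈ zeroOneBox n \ {0} := by
  rcases hxw with ⟨hint, -⟩ | ⟨k, hk, hint, hlt, hkc, hgt⟩
  · exact absurd hint (not_isInt_of_mem_Sn hx)
  have hwk : w k = 1 := by simp [hkc, ceil_eq_one_of_mem_Icc_of_not_intCast (hx.1 k) hk]
  simp only [mem_sdiff, mem_zeroOneBox, mem_singleton]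
  refine ⟨fun i => ?_, fun h => by simp [h] at hwk⟩
  rcases lt_trichotomy i k with hi | rfl | hi
  · obtain ⟨z, hz⟩ := hint i hi
    have hz01 := hx.1 i
    rw [hz] at hz01
    rw [hlt i hi, hz]
    exact intCast_eq_zero_or_eq_one_of_mem_Icc hz01
  · exact Or.inr hwk
  · exact Or.inl (hgt i hi)

lemma exists_mem_Sn_stdUp {w : Fin n → ℝ} (hw : w ∈ zeroOneBox n \ {0}) :
    ∃ x ∈ Sn n, stdUp x w := by
  simp only [mem_sdiff, mem_zeroOneBox, mem_singleton] at hw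
  obtain ⟨h01, hne⟩ := hw
  obtain ⟨k, hk, hgt⟩ := exists_ne_zero_forall_gt_eq_zero hne
  obtain ⟨x, hxk, hxi⟩ : ∃ x : Fin n → ℝ, x k = 1 / 2 ∧ ∀ i ≠ k, x i = w i :=
    ⟨update w k (1 / 2), by simp, fun i hi => update_of_ne hi _ _⟩
  have hxk_int : ¬ ∃ z : ℤ, x k = z := fun ⟨z, hz⟩ => half_ne_intCast z (hxk ▸ hz)
  have hxk_Icc : x k ∈ Set.Icc 0 1 := by rw [hxk]; norm_num
  have hsum : ∑ i, (x i - 1 / 2) ^ 2 = ((n : ℝ) - 1) / 4 := by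
    rw [← add_sum_erase _ _ (mem_univ k), sum_congr rfl fun i hi => by
      rw [hxi i (ne_of_mem_erase hi), sq_sub_half_of_eq_zero_or_eq_one (h01 i)]]
    simp [hxk, card_erase_of_mem, Nat.cast_sub (k.pos : 1 ≤ n)]
    ring
  refine ⟨x, ⟨fun i => ?_, by linarith⟩,
    Or.inr ⟨k, hxk_int, fun j hj => ?_, fun i hi => (hxi i hi.ne).symm, ?_, hgt⟩⟩
  · rcases eq_or_ne i k with rfl | hi
    · exact hxk_Icc
    · rcases h01 i with h | h <;> simp [hxi i hi, h]
  · rcases h01 j with h | h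
    · exact ⟨0, by simp [hxi j hj.ne, h]⟩
    · exact ⟨1, by simp [hxi j hj.ne, h]⟩
  · simp [(h01 k).resolve_left hk, ceil_eq_one_of_mem_Icc_of_not_intCast hxk_Icc hxk_int]

lemma snUp_eq : SnUp n = ↑(zeroOneBox n \ {0}) :=
  Set.ext fun _ => ⟨fun ⟨_, hx, hxw⟩ => mem_zeroOneBox_sdiff_of_stdUp hx hxw, exists_mem_Sn_stdUp⟩

lemma vpt_point_mem_stepBox {xb : Fin n → ℝ} (hxb : xb ∈ zeroOneBox n) (k : Fin n) :
    (fun i => if i < k then xb i else if i = k then xb k + 1 else 0) ∈ stepBox k (xb k + 1) := by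
  rw [mem_zeroOneBox] at hxb
  rw [mem_stepBox]
  exact ⟨fun i hi => by simpa [hi] using hxb i, by simp,
    fun i hi => by simp [hi.not_gt, hi.ne']⟩

lemma VS_eq : VS n = ↑(zeroOneBox n \ {0} ∪ twoStepBoxes n) := by
  apply subset_antisymm
  · simp only [VS, snUp_eq, Set.iUnion_subset_iff]
    rintro xb hxb w (rfl | ⟨k, hk, rfl⟩)
    · exact mem_union_left _ hxb
    · have hpt := vpt_point_mem_stepBox (mem_sdiff.mp hxb).1 k
      rcases mem_zeroOneBox.mp (mem_sdiff.mp hxb).1 k with h | h <;> rw [h] at hpt ⊢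
      · rw [zero_add] at hpt ⊢
        exact mem_union_left _ (stepBox_one_subset k hpt)
      · rw [one_add_one_eq_two] at hpt ⊢
        exact mem_union_right _ (stepBox_two_subset hk hpt)
  · intro w hw
    rcases mem_union.mp hw with hw | hw
    · exact Set.mem_biUnion (snUp_eq ▸ hw) (Set.mem_insert w _)
    · obtain ⟨k, hk, hwk⟩ := mem_biUnion.mp hw
      have hwk' := mem_stepBox.mp hwk
      refine Set.mem_biUnion (x := update w k 1)
        (snUp_eq ▸ stepBox_one_subset k (update_mem_stepBox hwk 1))
        (Or.inr ⟨k, by simpa using hk, ?_⟩)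
      funext i
      rcases lt_trichotomy i k with hi | rfl | hi
      · simp [hi, hi.ne]
      · norm_num [hwk'.2.1]
      · simp [hi.not_gt, hi.ne', hwk'.2.2 i hi]

lemma zeroOneBox_disjoint_twoStepBoxes : Disjoint (zeroOneBox n \ {0}) (twoStepBoxes n) := by
  rw [disjoint_left]
  intro w hw hw'
  obtain ⟨k, -, hwk⟩ := mem_biUnion.mp hw'
  have h2 := (mem_stepBox.mp hwk).2.1
  rcases mem_zeroOneBox.mp (mem_sdiff.mp hw).1 k with h | h <;> norm_num [h] at h2

theorem stmt19_general (n : ℕ) :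
    (VS n).ncard = 2 ^ n + 2 ^ (n - 1) - 2 := by
  rw [VS_eq, Set.ncard_coe_finset, card_union_of_disjoint zeroOneBox_disjoint_twoStepBoxes,
    card_sdiff_of_subset (by simp [mem_zeroOneBox]), card_zeroOneBox, card_singleton,
    card_twoStepBoxes]
  have := Nat.one_le_two_pow (n := n)
  have := Nat.one_le_two_pow (n := n - 1)
  omega

/-- For every `n ≥ 2`, `|V(S_n)| = 2ⁿ + 2^{n-1} - 2`. -/
theorem stmt19 (n : ℕ) (hn : 2 ≤ n) :
    (VS n).ncard = 2 ^ n + 2 ^ (n - 1) - 2 :=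
  stmt19_general n
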